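/- arXiv:1805.09652 — 2 statements merged into one kernel-verified Lean document; each statement's English description precedes it below -/
import Mathlib

section
/- Let E : (Ω → [0,∞]) → [0,∞] be a functional that is monotone (X ≤ Y pointwise implies E(X) ≤ E(Y)), countably subadditive (E(∑_n X_n) ≤ ∑_n E(X_n) for nonnegative X_n), positively homogeneous, and satisfies E(λ) ≤ λ for constants λ ≥ 0. Then E satisfies the Cauchy–Schwarz inequality: for all X, Y : Ω → [-∞,∞], E(|X|·|Y|) ≤ E(X²)^{1/2} · E(Y²)^{1/2}, with the conventions 0·∞ = 0 and ∞ - ∞ = ∞. -/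
open scoped ENNReal NNReal

/-!
If `E(f²) = α²` and `E(g²) = β²` with `α, β ∈ (0, ∞)`, the pointwise AM–GM inequality
`2αβ·fg ≤ β²f² + α²g²`, homogeneity and subadditivity give `2αβ·E(fg) ≤ 2α²β²`.
If `E(f²) = 0`, then `fg ≤ ∑' n, f²` pointwise (the right side is `∞` wherever `f ≠ 0`),
so countable subadditivity forces `E(fg) = 0`. Subadditivity for two summands needs
`E 0 = 0`, which holds as soon as `E` is finite somewhere, because `E 0 = 2 E 0`.
-/

theorem ENNReal.two_mul_le_add_sq (x y : ℝ≥0∞) : 2 * x * y ≤ x ^ 2 + y ^ 2 := by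
  rcases eq_or_ne x ∞ with rfl | hx
  · rcases eq_or_ne y 0 with rfl | hy <;> simp [*]
  rcases eq_or_ne y ∞ with rfl | hy
  · rcases eq_or_ne x 0 with rfl | hx0 <;> simp [*]
  lift x to ℝ≥0 using hx
  lift y to ℝ≥0 using hy
  exact_mod_cast _root_.two_mul_le_add_sq x y

section OuterFunctional

variable {Ω : Type*} {E : (Ω → ℝ≥0∞) → ℝ≥0∞}

theorem apply_mul_eq_zero_of_apply_sq_eq_zero
    (hmono : ∀ X Y : Ω → ℝ≥0∞, (∀ ω, X ω ≤ Y ω) → E X ≤ E Y)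
    (hcsub : ∀ X : ℕ → Ω → ℝ≥0∞, E (fun ω => ∑' n, X n ω) ≤ ∑' n, E (X n))
    {f : Ω → ℝ≥0∞} (hf : E (fun ω => f ω ^ 2) = 0) (g : Ω → ℝ≥0∞) :
    E (fun ω => f ω * g ω) = 0 := by
  have hle : ∀ ω, f ω * g ω ≤ ∑' _ : ℕ, f ω ^ 2 := fun ω => by
    rcases eq_or_ne (f ω) 0 with h | h
    · simp [h]
    · simp [ENNReal.tsum_const_eq_top_of_ne_zero (pow_ne_zero 2 h)]
  refine le_antisymm ?_ zero_le
  calc E (fun ω => f ω * g ω) ≤ E (fun ω => ∑' _ : ℕ, f ω ^ 2) := hmono _ _ hle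
    _ ≤ ∑' _ : ℕ, E (fun ω => f ω ^ 2) := hcsub _
    _ = 0 := by simp [hf]

theorem apply_zero_eq_zero_of_ne_top
    (hmono : ∀ X Y : Ω → ℝ≥0∞, (∀ ω, X ω ≤ Y ω) → E X ≤ E Y)
    (hhom : ∀ (c : ℝ≥0∞), 0 < c → c ≠ ∞ → ∀ X : Ω → ℝ≥0∞,
      E (fun ω => c * X ω) = c * E X)
    {X : Ω → ℝ≥0∞} (hX : E X ≠ ∞) :
    E (fun _ => 0) = 0 := by
  have hfin : E (fun _ => 0) ≠ ∞ := ne_top_of_le_ne_top hX (hmono _ _ fun _ => zero_le)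
  have hdouble : E (fun _ => 0) = 2 * E (fun _ => 0) := by
    simpa using hhom 2 two_pos ENNReal.ofNat_ne_top fun _ => 0
  rw [two_mul] at hdouble
  exact (ENNReal.add_right_inj hfin).1 (hdouble.symm.trans (add_zero _).symm)

theorem apply_add_le
    (hcsub : ∀ X : ℕ → Ω → ℝ≥0∞, E (fun ω => ∑' n, X n ω) ≤ ∑' n, E (X n))
    (hzero : E (fun _ => 0) = 0) (X Y : Ω → ℝ≥0∞) :
    E (fun ω => X ω + Y ω) ≤ E X + E Y := by
  have hsum (x y : ℝ≥0∞) : ∑' n : ℕ, (if n = 0 then x else if n = 1 then y else 0) = x + y := by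
    rw [tsum_eq_sum (s := {0, 1}) (by grind)]
    simp
  simpa only [apply_ite E, ite_apply, hzero, hsum] using
    hcsub fun n => if n = 0 then X else if n = 1 then Y else fun _ => 0

theorem apply_mul_le_mul_of_apply_sq_eq
    (hmono : ∀ X Y : Ω → ℝ≥0∞, (∀ ω, X ω ≤ Y ω) → E X ≤ E Y)
    (hcsub : ∀ X : ℕ → Ω → ℝ≥0∞, E (fun ω => ∑' n, X n ω) ≤ ∑' n, E (X n))
    (hhom : ∀ (c : ℝ≥0∞), 0 < c → c ≠ ∞ → ∀ X : Ω → ℝ≥0∞,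
      E (fun ω => c * X ω) = c * E X)
    {f g : Ω → ℝ≥0∞} {α β : ℝ≥0∞} (hα0 : α ≠ 0) (hαt : α ≠ ∞) (hβ0 : β ≠ 0) (hβt : β ≠ ∞)
    (hf : E (fun ω => f ω ^ 2) = α ^ 2) (hg : E (fun ω => g ω ^ 2) = β ^ 2) :
    E (fun ω => f ω * g ω) ≤ α * β := by
  have hzero : E (fun _ => 0) = 0 :=
    apply_zero_eq_zero_of_ne_top hmono hhom (hf ▸ ENNReal.pow_ne_top hαt)
  have hc0 : 2 * α * β ≠ 0 := by simp [hα0, hβ0]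
  have hct : 2 * α * β ≠ ∞ := by finiteness
  have hamgm : ∀ ω, 2 * α * β * (f ω * g ω) ≤ β ^ 2 * f ω ^ 2 + α ^ 2 * g ω ^ 2 := fun ω =>
    calc 2 * α * β * (f ω * g ω) = 2 * (β * f ω) * (α * g ω) := by ring
      _ ≤ (β * f ω) ^ 2 + (α * g ω) ^ 2 := ENNReal.two_mul_le_add_sq _ _
      _ = β ^ 2 * f ω ^ 2 + α ^ 2 * g ω ^ 2 := by ring
  rw [← ENNReal.mul_le_mul_iff_right hc0 hct]
  calc 2 * α * β * E (fun ω => f ω * g ω)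
      = E (fun ω => 2 * α * β * (f ω * g ω)) := (hhom _ (pos_iff_ne_zero.2 hc0) hct _).symm
    _ ≤ E (fun ω => β ^ 2 * f ω ^ 2 + α ^ 2 * g ω ^ 2) := hmono _ _ hamgm
    _ ≤ E (fun ω => β ^ 2 * f ω ^ 2) + E (fun ω => α ^ 2 * g ω ^ 2) :=
      apply_add_le hcsub hzero _ _
    _ = β ^ 2 * α ^ 2 + α ^ 2 * β ^ 2 := by
      rw [hhom _ (by positivity) (by finiteness), hhom _ (by positivity) (by finiteness), hf, hg]
    _ = 2 * α * β * (α * β) := by ring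

theorem apply_mul_le_rpow_mul_rpow
    (hmono : ∀ X Y : Ω → ℝ≥0∞, (∀ ω, X ω ≤ Y ω) → E X ≤ E Y)
    (hcsub : ∀ X : ℕ → Ω → ℝ≥0∞, E (fun ω => ∑' n, X n ω) ≤ ∑' n, E (X n))
    (hhom : ∀ (c : ℝ≥0∞), 0 < c → c ≠ ∞ → ∀ X : Ω → ℝ≥0∞,
      E (fun ω => c * X ω) = c * E X)
    (f g : Ω → ℝ≥0∞) :
    E (fun ω => f ω * g ω) ≤
      E (fun ω => f ω ^ 2) ^ ((1 : ℝ) / 2) * E (fun ω => g ω ^ 2) ^ ((1 : ℝ) / 2) := by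
  set a := E (fun ω => f ω ^ 2)
  set b := E (fun ω => g ω ^ 2)
  rcases eq_or_ne a 0 with ha0 | ha0
  · simp [apply_mul_eq_zero_of_apply_sq_eq_zero hmono hcsub ha0]
  rcases eq_or_ne b 0 with hb0 | hb0
  · simp [mul_comm (f _), apply_mul_eq_zero_of_apply_sq_eq_zero hmono hcsub hb0]
  have hhalf : (0 : ℝ) < 1 / 2 := by norm_num
  by_cases hfin : a ≠ ∞ ∧ b ≠ ∞
  · have hsq : ∀ x : ℝ≥0∞, (x ^ ((1 : ℝ) / 2)) ^ 2 = x := fun x => by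
      rw [← ENNReal.rpow_two, one_div, ENNReal.rpow_inv_rpow two_ne_zero]
    refine apply_mul_le_mul_of_apply_sq_eq hmono hcsub hhom ?_ ?_ ?_ ?_ (hsq a).symm (hsq b).symm
    · exact (ENNReal.rpow_eq_zero_iff_of_pos hhalf).not.2 ha0
    · exact (ENNReal.rpow_eq_top_iff_of_pos hhalf).not.2 hfin.1
    · exact (ENNReal.rpow_eq_zero_iff_of_pos hhalf).not.2 hb0
    · exact (ENNReal.rpow_eq_top_iff_of_pos hhalf).not.2 hfin.2
  · have htop : a ^ ((1 : ℝ) / 2) * b ^ ((1 : ℝ) / 2) = ∞ := by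
      simp only [ENNReal.mul_eq_top, ne_eq, ENNReal.rpow_eq_top_iff_of_pos hhalf,
        ENNReal.rpow_eq_zero_iff_of_pos hhalf]
      tauto
    exact htop ▸ le_top

end OuterFunctional

theorem cauchy_schwarz_for_outer_functional_general {Ω : Type*}
    (E : (Ω → ℝ≥0∞) → ℝ≥0∞)
    (hmono : ∀ X Y : Ω → ℝ≥0∞, (∀ ω, X ω ≤ Y ω) → E X ≤ E Y)
    (hcsub : ∀ X : ℕ → Ω → ℝ≥0∞, E (fun ω => ∑' n, X n ω) ≤ ∑' n, E (X n))
    (hhom : ∀ (c : ℝ≥0∞), 0 < c → c ≠ ∞ → ∀ X : Ω → ℝ≥0∞,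
      E (fun ω => c * X ω) = c * E X)
    (X Y : Ω → EReal) :
    E (fun ω => (X ω).abs * (Y ω).abs) ≤
      (E (fun ω => (X ω).abs ^ 2)) ^ ((1 : ℝ) / 2) *
        (E (fun ω => (Y ω).abs ^ 2)) ^ ((1 : ℝ) / 2) :=
  apply_mul_le_rpow_mul_rpow hmono hcsub hhom _ _

/-- Cauchy–Schwarz inequality for an outer-measure-like functional `E`
(Proposition 3.1): for `X, Y : Ω → [-∞,∞]`,
`E(|X|·|Y|) ≤ E(X²)^{1/2} · E(Y²)^{1/2}`. -/
theorem cauchy_schwarz_for_outer_functional {Ω : Type*}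
    (E : (Ω → ℝ≥0∞) → ℝ≥0∞)
    (hmono : ∀ X Y : Ω → ℝ≥0∞, (∀ ω, X ω ≤ Y ω) → E X ≤ E Y)
    (hcsub : ∀ X : ℕ → Ω → ℝ≥0∞, E (fun ω => ∑' n, X n ω) ≤ ∑' n, E (X n))
    (hhom : ∀ (c : ℝ≥0∞), 0 < c → c ≠ ∞ → ∀ X : Ω → ℝ≥0∞,
      E (fun ω => c * X ω) = c * E X)
    (hconst : ∀ c : ℝ≥0∞, E (fun _ => c) ≤ c)
    (X Y : Ω → EReal) :
    E (fun ω => (X ω).abs * (Y ω).abs) ≤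
      (E (fun ω => (X ω).abs ^ 2)) ^ ((1 : ℝ) / 2) *
        (E (fun ω => (Y ω).abs ^ 2)) ^ ((1 : ℝ) / 2) :=
  cauchy_schwarz_for_outer_functional_general E hmono hcsub hhom X Y
end

section
/- Let (x_n)_{n≥0} be real numbers with x_0 = 0. Then for every N, 4 x_N² - 4 ∑_{n=0}^{N-1} (max_{0≤i≤n} x_i)(x_{n+1} - x_n) ≥ 0. -/
/-- Nonnegativity of the hedged payoff in the pathwise BDG inequality
(Proposition 3.4): for reals with `x 0 = 0`,
`4 x_N² - 4 ∑_{n<N} (max_{0≤i≤n} x i)(x_{n+1} - x n) ≥ 0`. -/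
theorem hedged_payoff_nonneg (x : ℕ → ℝ) (hx0 : x 0 = 0) (N : ℕ) :
    0 ≤ 4 * (x N) ^ 2 -
        4 * ∑ n ∈ Finset.range N,
          ((Finset.range (n + 1)).sup' (Finset.nonempty_range_iff.mpr (Nat.succ_ne_zero n)) x)
            * (x (n + 1) - x n) := by
  set M : ℕ → ℝ := fun n =>
    (Finset.range (n + 1)).sup' (Finset.nonempty_range_iff.mpr (Nat.succ_ne_zero n)) x with hM
  have hMsucc : ∀ n, M (n + 1) = max (x (n + 1)) (M n) := by
    intro n
    simp only [hM]
    apply le_antisymm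
    · apply Finset.sup'_le
      intro i hi
      rcases Finset.mem_range_succ_iff.mp hi with hle
      rcases eq_or_lt_of_le hle with h | h
      · rw [h]; exact le_max_left _ _
      · exact le_max_of_le_right (Finset.le_sup' x (Finset.mem_range.mpr h))
    · apply max_le
      · exact Finset.le_sup' x (Finset.self_mem_range_succ (n+1))
      · apply Finset.sup'_le
        intro i hi
        exact Finset.le_sup' x (Finset.mem_range.mpr (Nat.lt_succ_of_lt (Finset.mem_range.mp hi)))
  have hMle : ∀ n, M n ≤ M (n + 1) := by
    intro n; rw [hMsucc]; exact le_max_right _ _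
  have hxleM : ∀ n, x n ≤ M n := by
    intro n
    exact Finset.le_sup' x (Finset.self_mem_range_succ n)
  have hM0 : M 0 = 0 := by
    simp [hM, hx0]
  have hMnonneg : ∀ n, 0 ≤ M n := by
    intro n
    induction n with
    | zero => rw [hM0]
    | succ k ih => exact le_trans ih (hMle k)
  have key : ∀ n, (2 * x n - M n) ^ 2 ≤ 4 * (x n) ^ 2 -
      4 * ∑ k ∈ Finset.range n, M k * (x (k + 1) - x k) := by
    intro n
    induction n with
    | zero => simp [hx0, hM0]
    | succ m ih =>
      rw [Finset.sum_range_succ]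
      have step : (2 * x (m + 1) - M m) ^ 2 - (2 * x m - M m) ^ 2
          = 4 * x (m+1) ^ 2 - 4 * x m ^ 2 - 4 * (M m * (x (m + 1) - x m)) := by ring
      have h1 : (2 * x (m + 1) - M m) ^ 2 ≤ 4 * x (m+1) ^ 2 -
          4 * (∑ k ∈ Finset.range m, M k * (x (k + 1) - x k) + M m * (x (m + 1) - x m)) := by
        nlinarith [ih]
      rcases le_or_gt (x (m + 1)) (M m) with h | h
      · have : M (m + 1) = M m := by rw [hMsucc]; exact max_eq_right h
        rw [this]; exact h1
      · have hMeq : M (m + 1) = x (m + 1) := by rw [hMsucc]; exact max_eq_left h.le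
        rw [hMeq]
        refine le_trans ?_ h1
        have h0 : 0 ≤ M m := hMnonneg m
        nlinarith [sq_nonneg (x (m+1) - M m)]
  have := key N
  nlinarith [sq_nonneg (2 * x N - M N)]
end
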